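/- arXiv:2004.01474 — 12 statements merged into one kernel-verified Lean document; each statement's English description precedes it below -/
import Mathlib

section
/- Let R be a commutative ring with 1, S a multiplicatively closed subset of R, and M an R-module. Then M is an S-comultiplication module if and only if for each submodule N of M, there exists s ∈ S such that s • (0 :_M ann(N)) ⊆ N ⊆ (0 :_M ann(N)). -/
open Pointwise

/-- A multiplicatively closed set: `0 ∉ S`, `1 ∈ S`, closed under multiplication. -/
def IsMCS {R : Type*} [CommRing R] (S : Set R) : Prop :=
  (0 : R) ∉ S ∧ (1 : R) ∈ S ∧ ∀ s ∈ S, ∀ t ∈ S, s * t ∈ S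

/-- The submodule `(0 :_M I) = {m ∈ M : I • m = 0}`. -/
def resid (R M : Type*) [CommRing R] [AddCommGroup M] [Module R M] (I : Ideal R) :
    Submodule R M where
  carrier := {m | ∀ a ∈ I, a • m = 0}
  add_mem' := by
    intro x y hx hy a ha
    rw [smul_add, hx a ha, hy a ha, add_zero]
  zero_mem' := by
    intro a _
    rw [smul_zero]
  smul_mem' := by
    intro r x hx a ha
    rw [smul_comm, hx a ha, smul_zero]

/-- `M` is an `S`-comultiplication module: for each submodule `N` there exist `s ∈ S` and an
ideal `I` with `s • (0 :_M I) ⊆ N ⊆ (0 :_M I)`. -/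
def IsSComult (R M : Type*) [CommRing R] [AddCommGroup M] [Module R M] (S : Set R) : Prop :=
  ∀ N : Submodule R M, ∃ s ∈ S, ∃ I : Ideal R,
    (∀ m ∈ resid R M I, s • m ∈ N) ∧ N ≤ resid R M I

/-- `M` is a comultiplication module: every submodule `N` equals `(0 :_M ann N)`. -/
def IsComult (R M : Type*) [CommRing R] [AddCommGroup M] [Module R M] : Prop :=
  ∀ N : Submodule R M, N = resid R M N.annihilator

section resid

variable {R M : Type*} [CommRing R] [AddCommGroup M] [Module R M]

theorem le_resid_iff_le_annihilator {N : Submodule R M} {I : Ideal R} :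
    N ≤ resid R M I ↔ I ≤ N.annihilator := by
  simp only [SetLike.le_def, Submodule.mem_annihilator]
  exact ⟨fun h a ha n hn => h hn a ha, fun h n hn a ha => h ha n hn⟩

theorem resid_antitone : Antitone (resid R M) :=
  fun _ _ hIJ _ hm a ha => hm a (hIJ ha)

theorem le_resid_annihilator (N : Submodule R M) : N ≤ resid R M N.annihilator :=
  le_resid_iff_le_annihilator.2 le_rfl

end resid

theorem stmt0_general (R M : Type*) [CommRing R] [AddCommGroup M] [Module R M]
    (S : Set R) :
    IsSComult R M S ↔
      ∀ N : Submodule R M, ∃ s ∈ S,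
        (∀ m ∈ resid R M N.annihilator, s • m ∈ N) ∧ N ≤ resid R M N.annihilator := by
  constructor
  · intro h N
    obtain ⟨s, hs, I, hsN, hNI⟩ := h N
    have hIann : I ≤ N.annihilator := le_resid_iff_le_annihilator.1 hNI
    exact ⟨s, hs, fun m hm => hsN m (resid_antitone hIann hm), le_resid_annihilator N⟩
  · intro h N
    obtain ⟨s, hs, hsN, hN⟩ := h N
    exact ⟨s, hs, N.annihilator, hsN, hN⟩

theorem stmt0 (R M : Type*) [CommRing R] [AddCommGroup M] [Module R M]
    (S : Set R) (hS : IsMCS S) :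
    IsSComult R M S ↔
      ∀ N : Submodule R M, ∃ s ∈ S,
        (∀ m ∈ resid R M N.annihilator, s • m ∈ N) ∧ N ≤ resid R M N.annihilator :=
  stmt0_general R M S
end

section
/- Let R be a commutative ring, S a multiplicatively closed subset, and M an R-module. Then M is an S-comultiplication module if and only if for all submodules K, N of M with ann(K) ⊆ ann(N), there exists s ∈ S such that s • N ⊆ K. -/
open Pointwise

theorem le_resid_iff {R M : Type*} [CommRing R] [AddCommGroup M] [Module R M]
    {N : Submodule R M} {I : Ideal R} : N ≤ resid R M I ↔ I ≤ N.annihilator :=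
  ⟨fun h a ha => Submodule.mem_annihilator.mpr fun _ hm => h hm a ha,
    fun h m hm _ ha => Submodule.mem_annihilator.mp (h ha) m hm⟩

theorem stmt1_general (R M : Type*) [CommRing R] [AddCommGroup M] [Module R M]
    (S : Set R) :
    IsSComult R M S ↔
      ∀ K N : Submodule R M, K.annihilator ≤ N.annihilator →
        ∃ s ∈ S, ∀ n ∈ N, s • n ∈ K := by
  constructor
  · intro h K N hann
    obtain ⟨s, hs, I, hsI, hKI⟩ := h K
    have hNI : N ≤ resid R M I := le_resid_iff.mpr ((le_resid_iff.mp hKI).trans hann)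
    exact ⟨s, hs, fun n hn => hsI n (hNI hn)⟩
  · intro h N
    obtain ⟨s, hs, hsub⟩ :=
      h N (resid R M N.annihilator) (le_resid_iff.mp le_rfl)
    exact ⟨s, hs, N.annihilator, hsub, le_resid_iff.mpr le_rfl⟩

theorem stmt1 (R M : Type*) [CommRing R] [AddCommGroup M] [Module R M]
    (S : Set R) (hS : IsMCS S) :
    IsSComult R M S ↔
      ∀ K N : Submodule R M, K.annihilator ≤ N.annihilator →
        ∃ s ∈ S, ∀ n ∈ N, s • n ∈ K :=
  stmt1_general R M S
end

section
/- Let S be a multiplicatively closed subset of R with saturation S* = {x ∈ R : x divides some s ∈ S}. Then an R-module M is an S-comultiplication module if and only if M is an S*-comultiplication module. -/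
open Pointwise

theorem IsSComult.of_forall_dvd {R M : Type*} [CommRing R] [AddCommGroup M] [Module R M]
    {S T : Set R} (hTS : ∀ t ∈ T, ∃ s ∈ S, t ∣ s) (hT : IsSComult R M T) :
    IsSComult R M S := by
  intro N
  obtain ⟨t, ht, I, h_smul, h_le⟩ := hT N
  obtain ⟨s, hs, c, rfl⟩ := hTS t ht
  refine ⟨t * c, hs, I, fun m hm => ?_, h_le⟩
  rw [mul_comm, mul_smul]
  exact N.smul_mem c (h_smul m hm)

theorem stmt3_general (R M : Type*) [CommRing R] [AddCommGroup M] [Module R M]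
    (S : Set R) :
    IsSComult R M S ↔ IsSComult R M {x : R | ∃ s ∈ S, x ∣ s} :=
  ⟨IsSComult.of_forall_dvd fun s hs => ⟨s, ⟨s, hs, dvd_rfl⟩, dvd_rfl⟩,
    IsSComult.of_forall_dvd fun _ hx => hx⟩

theorem stmt3 (R M : Type*) [CommRing R] [AddCommGroup M] [Module R M]
    (S : Set R) (hS : IsMCS S) :
    IsSComult R M S ↔ IsSComult R M {x : R | ∃ s ∈ S, x ∣ s} :=
  stmt3_general R M S
end

section
/- The ℤ-module ℤ is an S-comultiplication module for S = ℤ \ {0}, but ℤ is not a comultiplication ℤ-module. -/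
open Pointwise

/-! Over a principal ideal ring every nonzero ideal `(n)` is squeezed as `n • (0 :_R 0) ⊆ (n) ⊆ (0 :_R 0)`,
and `0 = (0 :_R R)`. Comultiplication fails in a domain that is not a field: a proper nonzero
ideal has zero annihilator, so `(0 :_R ann I)` is all of `R`. -/

section resid

variable {R M : Type*} [CommRing R] [AddCommGroup M] [Module R M]

lemma resid_bot : resid R M ⊥ = ⊤ :=
  eq_top_iff.mpr fun m _ a ha => by rw [(Submodule.mem_bot R).mp ha, zero_smul]

lemma resid_top : resid R M ⊤ = ⊥ :=
  eq_bot_iff.mpr fun m hm => by simpa using hm 1 Submodule.mem_top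

end resid

lemma isSComult_self_of_isPrincipalIdealRing (R : Type*) [CommRing R] [Nontrivial R]
    [IsPrincipalIdealRing R] : IsSComult R R {n : R | n ≠ 0} := by
  intro N
  obtain ⟨n, rfl⟩ := IsPrincipalIdealRing.principal (N : Ideal R)
  by_cases hn : n = 0
  · refine ⟨1, one_ne_zero, ⊤, fun m hm => ?_, ?_⟩
    · rw [resid_top, Submodule.mem_bot] at hm
      simp [hm]
    · simp [resid_top, hn]
  · refine ⟨n, hn, ⊥, fun m _ => Ideal.mem_span_singleton'.mpr ⟨m, mul_comm m n⟩, ?_⟩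
    rw [resid_bot]
    exact le_top

lemma annihilator_eq_bot_of_ne_bot {R : Type*} [CommRing R] [IsDomain R] {I : Ideal R}
    (hI : I ≠ ⊥) : Submodule.annihilator I = ⊥ :=
  (Ideal.mul_eq_bot.mp (Submodule.annihilator_mul I)).resolve_right hI

lemma not_isComult_self_of_not_isField {R : Type*} [CommRing R] [IsDomain R]
    (hR : ¬ IsField R) : ¬ IsComult R R := by
  intro h
  obtain ⟨I, hbot, htop⟩ := (Ring.not_isField_iff_exists_ideal_bot_lt_and_lt_top).mp hR
  have hI : (I : Submodule R R) = ⊤ := by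
    rw [h I, annihilator_eq_bot_of_ne_bot hbot.ne', resid_bot]
  exact htop.ne hI

theorem stmt5 :
    IsSComult ℤ ℤ {n : ℤ | n ≠ 0} ∧ ¬ IsComult ℤ ℤ :=
  ⟨isSComult_self_of_isPrincipalIdealRing ℤ, not_isComult_self_of_not_isField Int.not_isField⟩
end

section
/- Let f : M → M' be a surjective R-module homomorphism with t • ker(f) = 0 for some t ∈ S. If M is an S-comultiplication module, then M' is an S-comultiplication module. -/
/-! Apply the hypothesis to `f⁻¹(N')`, getting `s` and `I`; then `s * t` and the same `I` work
for `N'`, because `t` carries `f⁻¹(0 :_{M'} I)` into `(0 :_M I)` when `t • ker f = 0`. -/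

open Pointwise

section resid

variable {R M M' : Type*} [CommRing R] [AddCommGroup M] [Module R M]
  [AddCommGroup M'] [Module R M'] {I : Ideal R}

theorem map_mem_resid (f : M →ₗ[R] M') {m : M} (hm : m ∈ resid R M I) :
    f m ∈ resid R M' I := fun a ha => by
  rw [← map_smul, hm a ha, map_zero]

theorem smul_mem_resid_of_map_mem_resid (f : M →ₗ[R] M') {t : R}
    (hker : ∀ x ∈ LinearMap.ker f, t • x = 0) {m : M} (hm : f m ∈ resid R M' I) :
    t • m ∈ resid R M I := fun a ha => by
  rw [smul_comm]
  exact hker _ (by rw [LinearMap.mem_ker, map_smul, hm a ha])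

end resid

theorem stmt9 (R M M' : Type*) [CommRing R] [AddCommGroup M] [Module R M]
    [AddCommGroup M'] [Module R M'] (S : Set R) (hS : IsMCS S)
    (f : M →ₗ[R] M') (hf : Function.Surjective f)
    (t : R) (ht : t ∈ S) (hker : ∀ x ∈ LinearMap.ker f, t • x = 0)
    (h : IsSComult R M S) : IsSComult R M' S := by
  intro N'
  obtain ⟨s, hs, I, h_smul_resid_le, h_le_resid⟩ := h (N'.comap f)
  refine ⟨s * t, hS.2.2 s hs t ht, I, fun m' hm' => ?_, fun m' hm' => ?_⟩
  · obtain ⟨m, rfl⟩ := hf m'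
    have := h_smul_resid_le _ (smul_mem_resid_of_map_mem_resid f hker hm')
    rwa [Submodule.mem_comap, map_smul, map_smul, ← mul_smul] at this
  · obtain ⟨m, rfl⟩ := hf m'
    exact map_mem_resid f (h_le_resid hm')
end

section
/- Every submodule N of an S-comultiplication R-module M is itself an S-comultiplication R-module. -/
open Pointwise

theorem comap_resid_of_injective {R M N : Type*} [CommRing R] [AddCommGroup M] [Module R M]
    [AddCommGroup N] [Module R N] {f : N →ₗ[R] M} (hf : Function.Injective f) (I : Ideal R) :
    (resid R M I).comap f = resid R N I := by
  ext x
  change (∀ a ∈ I, a • f x = 0) ↔ ∀ a ∈ I, a • x = 0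
  simp only [← map_smul, map_eq_zero_iff f hf]

theorem IsSComult.of_injective {R M N : Type*} [CommRing R] [AddCommGroup M] [Module R M]
    [AddCommGroup N] [Module R N] {S : Set R} (h : IsSComult R M S) {f : N →ₗ[R] M}
    (hf : Function.Injective f) : IsSComult R N S := by
  intro K
  obtain ⟨s, hs, I, hsK, hKI⟩ := h (K.map f)
  refine ⟨s, hs, I, fun m hm => ?_, ?_⟩
  · rw [← comap_resid_of_injective hf] at hm
    rw [← Submodule.comap_map_eq_of_injective hf K, Submodule.mem_comap, map_smul]
    exact hsK _ hm
  · rw [← comap_resid_of_injective hf]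
    exact Submodule.map_le_iff_le_comap.mp hKI

theorem stmt10_general (R M : Type*) [CommRing R] [AddCommGroup M] [Module R M]
    (S : Set R) (N : Submodule R M)
    (h : IsSComult R M S) : IsSComult R N S :=
  h.of_injective N.injective_subtype

theorem stmt10 (R M : Type*) [CommRing R] [AddCommGroup M] [Module R M]
    (S : Set R) (hS : IsMCS S) (N : Submodule R M)
    (h : IsSComult R M S) : IsSComult R N S :=
  stmt10_general R M S N h
end

section
/- Let M₁ be an R₁-module, M₂ an R₂-module, S₁ ⊆ R₁ and S₂ ⊆ R₂ multiplicatively closed sets. Then M₁ × M₂ is an (S₁ × S₂)-comultiplication (R₁ × R₂)-module if and only if M₁ is an S₁-comultiplication R₁-module and M₂ is an S₂-comultiplication R₂-module. -/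
open Pointwise

/-!
Over `R₁ × R₂` the idempotents `(1, 0)` and `(0, 1)` split every submodule of `M₁ × M₂` as
`N₁ × N₂`, and every ideal is a product `I₁ × I₂`, with
`(0 :_{M₁ × M₂} I₁ × I₂) = (0 :_{M₁} I₁) × (0 :_{M₂} I₂)`. Hence `(s₁, s₂)` and `I₁ × I₂` witness
the comultiplication condition for `N₁ × N₂` exactly when `s₁, I₁` do so for `N₁` and `s₂, I₂`
for `N₂`.
-/

def IsSComultWitness (R M : Type*) [CommRing R] [AddCommGroup M] [Module R M]
    (N : Submodule R M) (s : R) (I : Ideal R) : Prop :=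
  (∀ m ∈ resid R M I, s • m ∈ N) ∧ N ≤ resid R M I

namespace ProdModule

variable {R₁ R₂ M₁ M₂ : Type*} [CommRing R₁] [CommRing R₂]
  [AddCommGroup M₁] [AddCommGroup M₂] [Module R₁ M₁] [Module R₂ M₂]

abbrev moduleFst : Module (R₁ × R₂) M₁ := Module.compHom M₁ (RingHom.fst R₁ R₂)

abbrev moduleSnd : Module (R₁ × R₂) M₂ := Module.compHom M₂ (RingHom.snd R₁ R₂)

attribute [local instance] moduleFst moduleSnd

@[simp]
theorem smul_fst_def (r : R₁ × R₂) (m : M₁) : r • m = r.1 • m := rfl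

@[simp]
theorem smul_snd_def (r : R₁ × R₂) (m : M₂) : r • m = r.2 • m := rfl

@[simp]
theorem smul_def (r : R₁ × R₂) (p : M₁ × M₂) : r • p = (r.1 • p.1, r.2 • p.2) := rfl

def prodSubmodule (N₁ : Submodule R₁ M₁) (N₂ : Submodule R₂ M₂) :
    Submodule (R₁ × R₂) (M₁ × M₂) where
  carrier := (N₁ : Set M₁) ×ˢ (N₂ : Set M₂)
  add_mem' hp hq := ⟨N₁.add_mem hp.1 hq.1, N₂.add_mem hp.2 hq.2⟩
  zero_mem' := ⟨N₁.zero_mem, N₂.zero_mem⟩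
  smul_mem' r _ hp := ⟨N₁.smul_mem r.1 hp.1, N₂.smul_mem r.2 hp.2⟩

@[simp]
theorem mem_prodSubmodule {N₁ : Submodule R₁ M₁} {N₂ : Submodule R₂ M₂} {p : M₁ × M₂} :
    p ∈ prodSubmodule N₁ N₂ ↔ p.1 ∈ N₁ ∧ p.2 ∈ N₂ :=
  Iff.rfl

def fstSubmodule (N : Submodule (R₁ × R₂) (M₁ × M₂)) : Submodule R₁ M₁ where
  carrier := {m | (m, 0) ∈ N}
  add_mem' {m m'} hm hm' := by simpa using N.add_mem hm hm'
  zero_mem' := N.zero_mem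
  smul_mem' r m hm := by simpa using N.smul_mem (r, 0) hm

@[simp]
theorem mem_fstSubmodule {N : Submodule (R₁ × R₂) (M₁ × M₂)} {m : M₁} :
    m ∈ fstSubmodule N ↔ (m, 0) ∈ N :=
  Iff.rfl

def sndSubmodule (N : Submodule (R₁ × R₂) (M₁ × M₂)) : Submodule R₂ M₂ where
  carrier := {m | (0, m) ∈ N}
  add_mem' {m m'} hm hm' := by simpa using N.add_mem hm hm'
  zero_mem' := N.zero_mem
  smul_mem' r m hm := by simpa using N.smul_mem (0, r) hm

@[simp]
theorem mem_sndSubmodule {N : Submodule (R₁ × R₂) (M₁ × M₂)} {m : M₂} :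
    m ∈ sndSubmodule N ↔ (0, m) ∈ N :=
  Iff.rfl

theorem eq_prodSubmodule (N : Submodule (R₁ × R₂) (M₁ × M₂)) :
    N = prodSubmodule (fstSubmodule N) (sndSubmodule N) := by
  ext p
  constructor
  · intro hp
    exact ⟨by simpa using N.smul_mem (1, 0) hp, by simpa using N.smul_mem (0, 1) hp⟩
  · rintro ⟨hp₁, hp₂⟩
    simpa using N.add_mem hp₁ hp₂

theorem resid_prod (I₁ : Ideal R₁) (I₂ : Ideal R₂) :
    resid (R₁ × R₂) (M₁ × M₂) (I₁.prod I₂) = prodSubmodule (resid R₁ M₁ I₁) (resid R₂ M₂ I₂) := by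
  ext p
  constructor
  · intro hp
    refine ⟨fun a ha => ?_, fun a ha => ?_⟩
    · exact congrArg Prod.fst (hp (a, 0) ((Ideal.mem_prod _ _).2 ⟨ha, I₂.zero_mem⟩))
    · exact congrArg Prod.snd (hp (0, a) ((Ideal.mem_prod _ _).2 ⟨I₁.zero_mem, ha⟩))
  · rintro ⟨hp₁, hp₂⟩ a ha
    obtain ⟨ha₁, ha₂⟩ := (Ideal.mem_prod _ _).1 ha
    rw [smul_def, hp₁ a.1 ha₁, hp₂ a.2 ha₂, Prod.mk_zero_zero]

theorem prodSubmodule_le_prodSubmodule_iff {N₁ P₁ : Submodule R₁ M₁} {N₂ P₂ : Submodule R₂ M₂} :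
    prodSubmodule N₁ N₂ ≤ prodSubmodule P₁ P₂ ↔ N₁ ≤ P₁ ∧ N₂ ≤ P₂ := by
  constructor
  · intro h
    exact ⟨fun m hm => (h (x := (m, 0)) ⟨hm, N₂.zero_mem⟩).1,
      fun m hm => (h (x := (0, m)) ⟨N₁.zero_mem, hm⟩).2⟩
  · rintro ⟨h₁, h₂⟩ p ⟨hp₁, hp₂⟩
    exact ⟨h₁ hp₁, h₂ hp₂⟩

theorem forall_smul_mem_prodSubmodule_iff (s₁ : R₁) (s₂ : R₂) {N₁ P₁ : Submodule R₁ M₁}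
    {N₂ P₂ : Submodule R₂ M₂} :
    (∀ p ∈ prodSubmodule P₁ P₂, (s₁, s₂) • p ∈ prodSubmodule N₁ N₂) ↔
      (∀ m ∈ P₁, s₁ • m ∈ N₁) ∧ (∀ m ∈ P₂, s₂ • m ∈ N₂) := by
  constructor
  · intro h
    exact ⟨fun m hm => (h (m, 0) ⟨hm, P₂.zero_mem⟩).1, fun m hm => (h (0, m) ⟨P₁.zero_mem, hm⟩).2⟩
  · rintro ⟨h₁, h₂⟩ p ⟨hp₁, hp₂⟩
    exact ⟨h₁ p.1 hp₁, h₂ p.2 hp₂⟩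

theorem isSComultWitness_prod_iff (N₁ : Submodule R₁ M₁) (N₂ : Submodule R₂ M₂) (s₁ : R₁)
    (s₂ : R₂) (I₁ : Ideal R₁) (I₂ : Ideal R₂) :
    IsSComultWitness (R₁ × R₂) (M₁ × M₂) (prodSubmodule N₁ N₂) (s₁, s₂) (I₁.prod I₂) ↔
      IsSComultWitness R₁ M₁ N₁ s₁ I₁ ∧ IsSComultWitness R₂ M₂ N₂ s₂ I₂ := by
  rw [IsSComultWitness, IsSComultWitness, IsSComultWitness, resid_prod,
    forall_smul_mem_prodSubmodule_iff, prodSubmodule_le_prodSubmodule_iff]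
  tauto

theorem isSComult_prod_iff (S₁ : Set R₁) (S₂ : Set R₂) :
    IsSComult (R₁ × R₂) (M₁ × M₂) (S₁ ×ˢ S₂) ↔ IsSComult R₁ M₁ S₁ ∧ IsSComult R₂ M₂ S₂ := by
  constructor
  · intro h
    have h' (N₁ : Submodule R₁ M₁) (N₂ : Submodule R₂ M₂) :
        (∃ s₁ ∈ S₁, ∃ I₁, IsSComultWitness R₁ M₁ N₁ s₁ I₁) ∧
          ∃ s₂ ∈ S₂, ∃ I₂, IsSComultWitness R₂ M₂ N₂ s₂ I₂ := by
      obtain ⟨⟨s₁, s₂⟩, ⟨hs₁, hs₂⟩, I, hI⟩ := h (prodSubmodule N₁ N₂)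
      rw [Ideal.ideal_prod_eq I] at hI
      replace hI := (isSComultWitness_prod_iff ..).1 hI
      exact ⟨⟨s₁, hs₁, _, hI.1⟩, ⟨s₂, hs₂, _, hI.2⟩⟩
    exact ⟨fun N₁ => (h' N₁ ⊥).1, fun N₂ => (h' ⊥ N₂).2⟩
  · rintro ⟨h₁, h₂⟩ N
    obtain ⟨s₁, hs₁, I₁, hI₁⟩ := h₁ (fstSubmodule N)
    obtain ⟨s₂, hs₂, I₂, hI₂⟩ := h₂ (sndSubmodule N)
    rw [eq_prodSubmodule N]
    exact ⟨(s₁, s₂), ⟨hs₁, hs₂⟩, I₁.prod I₂, (isSComultWitness_prod_iff ..).2 ⟨hI₁, hI₂⟩⟩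

end ProdModule

theorem stmt12_general (R₁ R₂ M₁ M₂ : Type*) [CommRing R₁] [CommRing R₂]
    [AddCommGroup M₁] [AddCommGroup M₂] [Module R₁ M₁] [Module R₂ M₂]
    (S₁ : Set R₁) (S₂ : Set R₂) :
    letI : Module (R₁ × R₂) M₁ := Module.compHom M₁ (RingHom.fst R₁ R₂)
    letI : Module (R₁ × R₂) M₂ := Module.compHom M₂ (RingHom.snd R₁ R₂)
    IsSComult (R₁ × R₂) (M₁ × M₂) (S₁ ×ˢ S₂) ↔
      IsSComult R₁ M₁ S₁ ∧ IsSComult R₂ M₂ S₂ :=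
  ProdModule.isSComult_prod_iff S₁ S₂

theorem stmt12 (R₁ R₂ M₁ M₂ : Type*) [CommRing R₁] [CommRing R₂]
    [AddCommGroup M₁] [AddCommGroup M₂] [Module R₁ M₁] [Module R₂ M₂]
    (S₁ : Set R₁) (S₂ : Set R₂) (hS₁ : IsMCS S₁) (hS₂ : IsMCS S₂) :
    letI : Module (R₁ × R₂) M₁ := Module.compHom M₁ (RingHom.fst R₁ R₂)
    letI : Module (R₁ × R₂) M₂ := Module.compHom M₂ (RingHom.snd R₁ R₂)
    IsSComult (R₁ × R₂) (M₁ × M₂) (S₁ ×ˢ S₂) ↔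
      IsSComult R₁ M₁ S₁ ∧ IsSComult R₂ M₂ S₂ :=
  stmt12_general R₁ R₂ M₁ M₂ S₁ S₂
end

section
/- Let M be an S-comultiplication R-module and I an ideal of R with (0 :_M I) = 0. Then there exists s ∈ S such that s • M ⊆ I • M, and moreover for every m ∈ M there exist s ∈ S and a ∈ I with s • m = a • m. -/
open Pointwise

/- Apply the `S`-comultiplication property to `N = I • K`: it gives `s ∈ S` and `J` with
`s • (0 :_M J) ⊆ I • K ⊆ (0 :_M J)`. Every `m ∈ K` already lies in `(0 :_M J)`, because for `j ∈ J`
we have `I • (j • m) = j • (I • m) ⊆ J • (I • K) = 0`, so `j • m ∈ (0 :_M I) = 0`. Hence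
`s • K ⊆ I • K`; take `K = M` and `K = R m`. -/

theorem mem_resid_of_forall_smul_mem {R M : Type*} [CommRing R] [AddCommGroup M] [Module R M]
    {I J : Ideal R} (hI : resid R M I = ⊥) {m : M} (hm : ∀ a ∈ I, a • m ∈ resid R M J) :
    m ∈ resid R M J := by
  intro j hj
  have hjm : j • m ∈ resid R M I := fun a ha => by rw [smul_comm]; exact hm a ha j hj
  rwa [hI] at hjm

theorem exists_smul_mem_ideal_smul {R M : Type*} [CommRing R] [AddCommGroup M] [Module R M]
    {S : Set R} (h : IsSComult R M S) {I : Ideal R} (hI : resid R M I = ⊥)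
    (K : Submodule R M) : ∃ s ∈ S, ∀ m ∈ K, s • m ∈ I • K := by
  obtain ⟨s, hs, J, hsJ, hJ⟩ := h (I • K)
  exact ⟨s, hs, fun m hm =>
    hsJ m (mem_resid_of_forall_smul_mem hI fun a ha => hJ (Submodule.smul_mem_smul ha hm))⟩

theorem stmt14_general (R M : Type*) [CommRing R] [AddCommGroup M] [Module R M]
    (S : Set R) (h : IsSComult R M S)
    (I : Ideal R) (hI : resid R M I = ⊥) :
    (∃ s ∈ S, ∀ m : M, s • m ∈ I • (⊤ : Submodule R M)) ∧
      ∀ m : M, ∃ s ∈ S, ∃ a ∈ I, s • m = a • m := by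
  refine ⟨?_, fun m => ?_⟩
  · obtain ⟨s, hs, hsM⟩ := exists_smul_mem_ideal_smul h hI ⊤
    exact ⟨s, hs, fun m => hsM m trivial⟩
  · obtain ⟨s, hs, hsm⟩ := exists_smul_mem_ideal_smul h hI (Submodule.span R {m})
    obtain ⟨a, ha, hasm⟩ :=
      Submodule.mem_smul_span_singleton.mp (hsm m (Submodule.mem_span_singleton_self m))
    exact ⟨s, hs, a, ha, hasm.symm⟩

theorem stmt14 (R M : Type*) [CommRing R] [AddCommGroup M] [Module R M]
    (S : Set R) (hS : IsMCS S) (h : IsSComult R M S)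
    (I : Ideal R) (hI : resid R M I = ⊥) :
    (∃ s ∈ S, ∀ m : M, s • m ∈ I • (⊤ : Submodule R M)) ∧
      ∀ m : M, ∃ s ∈ S, ∃ a ∈ I, s • m = a • m :=
  stmt14_general R M S h I hI
end

section
/- (S-Dual Nakayama's Lemma) Let S be a multiplicatively closed subset of R satisfying the maximal multiple condition and M an S-comultiplication R-module. Suppose I is an ideal of R such that t • I ⊆ Jac(R) for some t ∈ S. If (0 :_M (t • I)) = 0, then there exists s ∈ S with s • M = 0. -/
open Pointwise

/-!
Let `σ ∈ S` be a multiple of every element of `S`. Applying the `S`-comultiplication property to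
`J • Rm`, where `J = t • I`, and using `(0 :_M J) = 0`, gives `σ m = b m` with
`b ∈ J ⊆ Jac(R)` for every `m`. Since `σ² ∈ S` divides `σ`, say `σ = σ² d`, applying this to
`σ m` gives `σ m = (d b') σ m`, and `1 - d b'` is a unit.
-/

section

variable {R M : Type*} [CommRing R] [AddCommGroup M] [Module R M]

lemma eq_zero_of_eq_smul_of_mem_jacobson_bot {x : R} (hx : x ∈ (⊥ : Ideal R).jacobson) {m : M}
    (hm : m = x • m) : m = 0 := by
  have hunit : IsUnit (1 - x) := by
    simpa [sub_eq_neg_add, mul_comm] using Ideal.mem_jacobson_bot.mp hx (-1)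
  rw [← hunit.smul_eq_zero, sub_smul, one_smul, ← hm, sub_self]

lemma smul_eq_zero_of_mul_self_dvd_of_forall_smul_eq_smul {σ : R} (hσ : σ * σ ∣ σ)
    (hM : ∀ m : M, ∃ b ∈ (⊥ : Ideal R).jacobson, σ • m = b • m) (m : M) :
    σ • m = 0 := by
  obtain ⟨d, hd⟩ := hσ
  obtain ⟨b, hb, hσb⟩ := hM (σ • m)
  refine eq_zero_of_eq_smul_of_mem_jacobson_bot (Ideal.mul_mem_left _ d hb) ?_
  calc σ • m = (σ * σ * d) • m := by rw [← hd]
    _ = d • σ • σ • m := by rw [mul_comm, mul_smul, mul_smul]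
    _ = (d * b) • σ • m := by rw [hσb, mul_smul]

lemma IsSComult.exists_smul_eq_smul_of_resid_eq_bot {S : Set R} (h : IsSComult R M S) {J : Ideal R}
    (hJ : resid R M J = ⊥) (m : M) : ∃ s ∈ S, ∃ b ∈ J, s • m = b • m := by
  obtain ⟨s, hs, K, hKs, hK⟩ := h (J • Submodule.span R {m})
  have hmK : m ∈ resid R M K := by
    intro a ha
    have : a • m ∈ resid R M J := fun b hb => by
      rw [smul_comm]
      exact hK (Submodule.mem_smul_span_singleton.mpr ⟨b, hb, rfl⟩) a ha
    simpa [hJ] using this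
  obtain ⟨b, hb, hbm⟩ := Submodule.mem_smul_span_singleton.mp (hKs m hmK)
  exact ⟨s, hs, b, hb, hbm.symm⟩

lemma IsSComult.exists_smul_eq_smul_of_forall_dvd {S : Set R} (h : IsSComult R M S) {J : Ideal R}
    (hJ : resid R M J = ⊥) {σ : R} (hσ : ∀ s ∈ S, s ∣ σ) (m : M) :
    ∃ b ∈ J, σ • m = b • m := by
  obtain ⟨s, hs, b, hb, hsb⟩ := h.exists_smul_eq_smul_of_resid_eq_bot hJ m
  obtain ⟨c, rfl⟩ := hσ s hs
  exact ⟨c * b, J.mul_mem_left c hb, by rw [mul_comm, mul_smul, hsb, mul_smul]⟩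

end

theorem stmt15_general (R M : Type*) [CommRing R] [AddCommGroup M] [Module R M]
    (S : Set R) (hS : IsMCS S) (hmax : ∃ s ∈ S, ∀ t ∈ S, t ∣ s)
    (h : IsSComult R M S) (I : Ideal R) (t : R)
    (htI : t • I ≤ (⊥ : Ideal R).jacobson)
    (h0 : resid R M (t • I) = ⊥) :
    ∃ s ∈ S, ∀ m : M, s • m = 0 := by
  obtain ⟨σ, hσS, hσ⟩ := hmax
  refine ⟨σ, hσS, smul_eq_zero_of_mul_self_dvd_of_forall_smul_eq_smul
    (hσ _ (hS.2.2 σ hσS σ hσS)) fun m => ?_⟩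
  obtain ⟨b, hb, hσb⟩ := h.exists_smul_eq_smul_of_forall_dvd h0 hσ m
  exact ⟨b, htI hb, hσb⟩

theorem stmt15 (R M : Type*) [CommRing R] [AddCommGroup M] [Module R M]
    (S : Set R) (hS : IsMCS S) (hmax : ∃ s ∈ S, ∀ t ∈ S, t ∣ s)
    (h : IsSComult R M S) (I : Ideal R) (t : R) (ht : t ∈ S)
    (htI : t • I ≤ (⊥ : Ideal R).jacobson)
    (h0 : resid R M (t • I) = ⊥) :
    ∃ s ∈ S, ∀ m : M, s • m = 0 :=
  stmt15_general R M S hS hmax h I t htI h0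
end

section
/- (Dual Nakayama's Lemma) Let M be a comultiplication R-module and I an ideal of R with I ⊆ Jac(R). If (0 :_M I) = 0, then M = 0. -/
open Pointwise

/-
If `(0 :_M I) = 0`, then every `a` killing `I • N` sends `N` into `(0 :_M I) = 0`, so
`ann (I • N) ≤ ann N`. In a comultiplication module `N = (0 :_M ann N)` and `(0 :_M -)` is
antitone, hence `N ≤ I • N`. Taking `N = R x` cyclic, the usual Nakayama lemma for the
finitely generated module `R x` and `I ⊆ Jac R` gives `x = 0`.
-/

section

variable {R M : Type*} [CommRing R] [AddCommGroup M] [Module R M]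

theorem annihilator_smul_le_annihilator_of_resid_eq_bot {I : Ideal R} (h0 : resid R M I = ⊥)
    (N : Submodule R M) : (I • N).annihilator ≤ N.annihilator := by
  intro a ha
  refine Submodule.mem_annihilator.mpr fun n hn => ?_
  have han : a • n ∈ resid R M I := fun i hi => by
    rw [smul_comm]
    exact Submodule.mem_annihilator.mp ha _ (Submodule.smul_mem_smul hi hn)
  rwa [h0, Submodule.mem_bot] at han

theorem IsComult.le_smul_of_resid_eq_bot (h : IsComult R M) {I : Ideal R}
    (h0 : resid R M I = ⊥) (N : Submodule R M) : N ≤ I • N :=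
  calc N = resid R M N.annihilator := h N
    _ ≤ resid R M (I • N).annihilator :=
        resid_antitone (annihilator_smul_le_annihilator_of_resid_eq_bot h0 N)
    _ = I • N := (h _).symm

end

theorem stmt16 (R M : Type*) [CommRing R] [AddCommGroup M] [Module R M]
    (h : IsComult R M) (I : Ideal R) (hI : I ≤ (⊥ : Ideal R).jacobson)
    (h0 : resid R M I = ⊥) : ∀ m : M, m = 0 := by
  intro x
  have hx : Submodule.span R {x} = ⊥ :=
    Submodule.eq_bot_of_le_smul_of_le_jacobson_bot I _ (Submodule.fg_span_singleton x)
      (h.le_smul_of_resid_eq_bot h0 _) hI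
  exact Submodule.span_singleton_eq_bot.mp hx
end

section
/- Every S-comultiplication module M that is S-torsion free is an S-cyclic module. -/
open Pointwise

/-! Let `s` be the torsion-freeness witness. If `s • M = 0` we are done. Otherwise pick `m` with
`s • m ≠ 0` and apply the comultiplication property to `R • m`, getting `s' (0 :_M I) ⊆ R • m ⊆
(0 :_M I)`. Every `a ∈ I` kills `m`, so torsion-freeness gives `s * a = 0`; thus
`s • M ⊆ (0 :_M I)` and `s' s • M ⊆ R • m`. -/

section

variable {R M : Type*} [CommRing R] [AddCommGroup M] [Module R M]

theorem smul_mem_resid {I : Ideal R} {s : R} (hs : ∀ a ∈ I, s * a = 0) (x : M) :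
    s • x ∈ resid R M I := by
  intro a ha
  rw [smul_smul, mul_comm, hs a ha, zero_smul]

theorem mul_eq_zero_of_span_le_resid {s : R}
    (hs : ∀ (a : R) (m : M), a • m = 0 → s * a = 0 ∨ s • m = 0) {m : M} (hm : s • m ≠ 0)
    {I : Ideal R} (hI : Submodule.span R {m} ≤ resid R M I) : ∀ a ∈ I, s * a = 0 := by
  intro a ha
  have ham : a • m = 0 := hI (Submodule.mem_span_singleton_self m) a ha
  exact (hs a m ham).resolve_right hm

end

theorem stmt18 (R M : Type*) [CommRing R] [AddCommGroup M] [Module R M]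
    (S : Set R) (hS : IsMCS S) (h : IsSComult R M S)
    (htf : ∃ s ∈ S, ∀ (a : R) (m : M), a • m = 0 → s * a = 0 ∨ s • m = 0) :
    ∃ s ∈ S, ∃ m : M, ∀ x : M, s • x ∈ Submodule.span R {m} := by
  obtain ⟨s, hsS, hs⟩ := htf
  by_cases hkill : ∀ m : M, s • m = 0
  · exact ⟨s, hsS, 0, fun x => by simp [hkill x]⟩
  obtain ⟨m, hm⟩ := not_forall.mp hkill
  obtain ⟨s', hs'S, I, hs'I, hI⟩ := h (Submodule.span R {m})
  refine ⟨s' * s, hS.2.2 s' hs'S s hsS, m, fun x => ?_⟩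
  rw [mul_smul]
  exact hs'I _ (smul_mem_resid (mul_eq_zero_of_span_le_resid hs hm hI) x)
end

section
/- Let M be an S-comultiplication R-module and N a submodule with ann(N) ∩ S = ∅. Then N is an S-second submodule of M if and only if ann(N) is an S-prime ideal of R and there exists s ∈ S with s • N ⊆ s' • N for every s' ∈ S. -/
/-!
The substance is the converse. Let `s₁` witness that `ann N` is `S`-prime and let `s₂ • N` lie in
every `s' • N`. Given `a`, the comultiplication property yields `s₃ ∈ S` and `I` with
`s₃ • (0 :_M I) ⊆ a • N ⊆ (0 :_M I)`, so `I a ⊆ ann N`. If `s₁ a ∉ ann N`, primality forces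
`s₁ I ⊆ ann N`, i.e. `s₁ • N ⊆ (0 :_M I)`, whence `s₂ • N ⊆ (s₃ s₁) • N ⊆ a • N`. Applying this
dichotomy to `a = s₂ r` shows that `N` is `S`-second with witness `s₁ s₂`.
-/

open Pointwise

/-- `N` is an `S`-second submodule of `M`. -/
def IsSSecond {R M : Type*} [CommRing R] [AddCommGroup M] [Module R M]
    (S : Set R) (N : Submodule R M) : Prop :=
  (∀ s ∈ S, s ∉ N.annihilator) ∧
    ∃ s ∈ S, ∀ r : R, (s * r) • N = (⊥ : Submodule R M) ∨ (s * r) • N = s • N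

/-- `P` is an `S`-prime ideal of `R`. -/
def IsSPrimeIdeal {R : Type*} [CommRing R] (S : Set R) (P : Ideal R) : Prop :=
  (∀ s ∈ S, s ∉ P) ∧ ∃ s ∈ S, ∀ a b : R, a * b ∈ P → s * a ∈ P ∨ s * b ∈ P

section

variable {R M : Type*} [CommRing R] [AddCommGroup M] [Module R M]

namespace Submodule

theorem pointwise_smul_le_iff {r : R} {N K : Submodule R M} :
    r • N ≤ K ↔ ∀ n ∈ N, r • n ∈ K := by
  rw [pointwise_smul_def, map_le_iff_le_comap]
  rfl

theorem pointwise_smul_eq_bot_iff {r : R} {N : Submodule R M} :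
    r • N = ⊥ ↔ r ∈ N.annihilator := by
  simp only [eq_bot_iff, pointwise_smul_le_iff, mem_bot, mem_annihilator]

theorem mul_smul_le_smul (s r : R) (N : Submodule R M) : (s * r) • N ≤ s • N := by
  rw [mul_comm, mul_smul]
  exact smul_le_self_of_tower r (s • N)

end Submodule

open Submodule

theorem smul_le_resid_iff {r : R} {N : Submodule R M} {I : Ideal R} :
    r • N ≤ resid R M I ↔ ∀ c ∈ I, c * r ∈ N.annihilator := by
  simp only [pointwise_smul_le_iff, mem_annihilator, mul_smul]
  exact ⟨fun h c hc n hn => h n hn c hc, fun h n hn c hc => h c hc n hn⟩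

namespace IsSSecond

variable {S : Set R} {N : Submodule R M}

theorem isSPrimeIdeal_annihilator (hN : IsSSecond S N) : IsSPrimeIdeal S N.annihilator := by
  obtain ⟨hS, s, hs, hsec⟩ := hN
  refine ⟨hS, s, hs, fun a b hab => ?_⟩
  simp only [← pointwise_smul_eq_bot_iff]
  refine (hsec a).imp_right fun ha => (hsec b).resolve_right fun hb => hS s hs ?_
  rw [← pointwise_smul_eq_bot_iff]
  calc s • N = (s * b) • N := hb.symm
    _ = b • (s * a) • N := by rw [ha, ← mul_smul, mul_comm]
    _ = s • (a * b) • N := by rw [← mul_smul, ← mul_smul, mul_left_comm, mul_comm a]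
    _ = ⊥ := by rw [pointwise_smul_eq_bot_iff.mpr hab, smul_bot']

theorem exists_smul_le (hmul : ∀ s ∈ S, ∀ t ∈ S, s * t ∈ S) (hN : IsSSecond S N) :
    ∃ s ∈ S, ∀ s' ∈ S, s • N ≤ s' • N := by
  obtain ⟨hS, s, hs, hsec⟩ := hN
  refine ⟨s, hs, fun s' hs' => ?_⟩
  obtain hbot | heq := hsec s'
  · exact absurd (pointwise_smul_eq_bot_iff.mp hbot) (hS _ (hmul s hs s' hs'))
  · rw [← heq, mul_comm]
    exact mul_smul_le_smul s' s N

end IsSSecond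

theorem isSSecond_of_mul_mem_annihilator_or_smul_le {S : Set R} {N : Submodule R M}
    (hN : ∀ s ∈ S, s ∉ N.annihilator) {s₁ s₂ : R} (hs : s₁ * s₂ ∈ S)
    (hdich : ∀ a : R, s₁ * a ∈ N.annihilator ∨ s₂ • N ≤ a • N) : IsSSecond S N := by
  refine ⟨hN, s₁ * s₂, hs, fun r => ?_⟩
  refine (hdich (s₂ * r)).imp (fun h => ?_) fun h => ?_
  · rwa [pointwise_smul_eq_bot_iff, mul_assoc]
  · refine le_antisymm (mul_smul_le_smul _ r N) ?_
    calc (s₁ * s₂) • N = s₁ • s₂ • N := mul_smul s₁ s₂ N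
      _ ≤ s₁ • (s₂ * r) • N := smul_mono_right s₁ h
      _ = (s₁ * s₂ * r) • N := by rw [← mul_smul, mul_assoc]

theorem IsSComult.mul_mem_annihilator_or_smul_le {S : Set R} (hcomult : IsSComult R M S)
    (hmul : ∀ s ∈ S, ∀ t ∈ S, s * t ∈ S) {N : Submodule R M} {s₁ s₂ : R} (hs₁ : s₁ ∈ S)
    (hprime : ∀ a b : R, a * b ∈ N.annihilator → s₁ * a ∈ N.annihilator ∨ s₁ * b ∈ N.annihilator)
    (hmin : ∀ s' ∈ S, s₂ • N ≤ s' • N) (a : R) :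
    s₁ * a ∈ N.annihilator ∨ s₂ • N ≤ a • N := by
  refine or_iff_not_imp_left.mpr fun ha => ?_
  obtain ⟨s₃, hs₃, I, hresid_le, hle_resid⟩ := hcomult (a • N)
  have hs₁N : s₁ • N ≤ resid R M I := smul_le_resid_iff.mpr fun c hc => by
    rw [mul_comm]
    exact ((hprime c a) (smul_le_resid_iff.mp hle_resid c hc)).resolve_right ha
  calc s₂ • N ≤ (s₃ * s₁) • N := hmin _ (hmul s₃ hs₃ s₁ hs₁)
    _ = s₃ • s₁ • N := mul_smul s₃ s₁ N
    _ ≤ s₃ • resid R M I := smul_mono_right s₃ hs₁N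
    _ ≤ a • N := pointwise_smul_le_iff.mpr hresid_le

end

theorem stmt19 (R M : Type*) [CommRing R] [AddCommGroup M] [Module R M]
    (S : Set R) (hS : IsMCS S) (h : IsSComult R M S)
    (N : Submodule R M) (hN : ∀ s ∈ S, s ∉ N.annihilator) :
    IsSSecond S N ↔
      (IsSPrimeIdeal S N.annihilator ∧ ∃ s ∈ S, ∀ s' ∈ S, s • N ≤ s' • N) := by
  have hmul := hS.2.2
  refine ⟨fun hsec => ⟨hsec.isSPrimeIdeal_annihilator, hsec.exists_smul_le hmul⟩, ?_⟩
  rintro ⟨⟨-, s₁, hs₁, hprime⟩, s₂, hs₂, hmin⟩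
  exact isSSecond_of_mul_mem_annihilator_or_smul_le hN (hmul s₁ hs₁ s₂ hs₂)
    (h.mul_mem_annihilator_or_smul_le hmul hs₁ hprime hmin)
end
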